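/- There exists a constant C > 0 such that for all N ≥ 2, setting K = ⌈2N² · log N⌉ (natural logarithm), the random-transpositions shuffle satisfies, for every starting deck d (a permutation of Fin N): TV(μ_K(d), U) ≤ C/N, where U is the uniform distribution on the permutations of Fin N. -/

import Mathlib

open scoped ENNReal

/-- Total variation distance between two distributions: `(1/2) Σ_x |μ(x) − ν(x)|`. -/
noncomputable def tvDist {X : Type*} (μ ν : PMF X) : ℝ≥0∞ :=
  (1 / 2) * ∑' x, max (μ x - ν x) (ν x - μ x)

/-- One step of the random-transpositions shuffle: sample positions `p` and `p'` independently
and uniformly, and swap the cards at positions `p` and `p'` (if `p = p'` nothing changes). -/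
noncomputable def rtransStep {N : ℕ} (h : 0 < N) (d : Equiv.Perm (Fin N)) :
    PMF (Equiv.Perm (Fin N)) :=
  haveI : Nonempty (Fin N) := ⟨⟨0, h⟩⟩
  (PMF.uniformOfFintype (Fin N)).bind fun p =>
    (PMF.uniformOfFintype (Fin N)).bind fun p' =>
      PMF.pure (d * Equiv.swap p p')

/-- Distribution of the deck after `K` steps of the random-transpositions shuffle from `d`. -/
noncomputable def rtransWalk {N : ℕ} (h : 0 < N) (d : Equiv.Perm (Fin N)) :
    ℕ → PMF (Equiv.Perm (Fin N))
  | 0 => PMF.pure d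
  | (K + 1) => (rtransWalk h d K).bind (rtransStep h)

/-- The uniform distribution on permutations of `Fin N`. -/
noncomputable def uniformPerm (N : ℕ) : PMF (Equiv.Perm (Fin N)) :=
  haveI : Nonempty (Equiv.Perm (Fin N)) := ⟨1⟩
  PMF.uniformOfFintype (Equiv.Perm (Fin N))

/-! Couple the walk started at `d` with a walk started at a uniformly random deck `e`: at each
step both decks move the card that `d` holds at a random position `p'` to the same random
position `p`. The second walk stays uniform, and the number `m` of positions at which the decks
differ never increases; it drops when `p` and `p'` are both mismatched, which has probability
`m²/N²`. The potential `W m = 2m/(m+1)` satisfies `m² W(m-1) = (m²-1) W m`, so `E[W m]` contracts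
by the factor `1 - 1/N²` at every step. As `1 ≤ W m ≤ 2` for `m ≠ 0`, the coupling inequality
bounds the TV distance after `K` steps by `2 (1 - 1/N²)^K ≤ 2 exp(-K/N²) ≤ 2/N`. -/

open Finset

namespace PMF

variable {α β : Type*}

noncomputable def expect (μ : PMF α) (f : α → ℝ≥0∞) : ℝ≥0∞ := ∑' a, μ a * f a

lemma expect_pure (a : α) (f : α → ℝ≥0∞) : (pure a).expect f = f a := by
  rw [expect, tsum_eq_single a fun b hb => by simp [pure_apply, hb]]
  simp

lemma expect_bind (μ : PMF α) (g : α → PMF β) (f : β → ℝ≥0∞) :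
    (μ.bind g).expect f = μ.expect fun a => (g a).expect f := by
  simp only [expect, bind_apply, ← ENNReal.tsum_mul_right, ← ENNReal.tsum_mul_left, mul_assoc]
  exact ENNReal.tsum_comm

lemma expect_mono (μ : PMF α) {f g : α → ℝ≥0∞} (h : ∀ a, f a ≤ g a) :
    μ.expect f ≤ μ.expect g :=
  ENNReal.tsum_le_tsum fun a => mul_le_mul_right (h a) _

lemma expect_const (μ : PMF α) (c : ℝ≥0∞) : μ.expect (fun _ => c) = c := by
  simp [expect, ENNReal.tsum_mul_right, μ.tsum_coe]

lemma expect_const_mul (μ : PMF α) (c : ℝ≥0∞) (f : α → ℝ≥0∞) :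
    μ.expect (fun a => c * f a) = c * μ.expect f := by
  simp only [expect, ← ENNReal.tsum_mul_left, mul_left_comm]

lemma expect_uniformOfFintype [Fintype α] [Nonempty α] (f : α → ℝ≥0∞) :
    (uniformOfFintype α).expect f = (Fintype.card α : ℝ≥0∞)⁻¹ * ∑ a, f a := by
  simp [expect, uniformOfFintype_apply, tsum_fintype, mul_sum]

lemma toOuterMeasure_le_expect (μ : PMF α) {s : Set α} {f : α → ℝ≥0∞} (hf : ∀ a ∈ s, 1 ≤ f a) :
    μ.toOuterMeasure s ≤ μ.expect f := by
  rw [toOuterMeasure_apply]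
  refine ENNReal.tsum_le_tsum fun a => ?_
  by_cases ha : a ∈ s
  · simpa [ha] using mul_le_mul_right (hf a ha) (μ a)
  · simp [ha]

lemma expect_bind_le (μ : PMF α) {g : α → PMF β} {f : β → ℝ≥0∞} {c : ℝ≥0∞}
    (h : ∀ a, (g a).expect f ≤ c) : (μ.bind g).expect f ≤ c := by
  rw [expect_bind, ← μ.expect_const c]
  exact μ.expect_mono h

lemma map_uniformOfFintype_equiv [Fintype α] [Nonempty α] (σ : α ≃ α) :
    (uniformOfFintype α).map σ = uniformOfFintype α := by
  ext a
  rw [map_apply, tsum_eq_single (σ.symm a) fun b hb => by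
    simp [Equiv.eq_symm_apply] at hb; simp [Ne.symm hb]]
  simp

lemma uniformOfFintype_bind_equiv [Fintype α] [Nonempty α] (σ : α ≃ α) (g : α → PMF β) :
    ((uniformOfFintype α).bind fun a => g (σ a)) = (uniformOfFintype α).bind g := by
  conv_rhs => rw [← map_uniformOfFintype_equiv σ, bind_map]
  rfl

lemma map_fst_apply (γ : PMF (α × β)) (a : α) : γ.map Prod.fst a = ∑' b, γ (a, b) := by
  rw [map_apply, ENNReal.tsum_prod', tsum_eq_single a fun a' ha' => by simp [Ne.symm ha']]
  simp

lemma map_snd_apply (γ : PMF (α × β)) (b : β) : γ.map Prod.snd b = ∑' a, γ (a, b) := by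
  rw [map_apply, ENNReal.tsum_prod', ENNReal.tsum_comm,
    tsum_eq_single b fun b' hb' => by simp [Ne.symm hb']]
  simp

noncomputable def iterBind (κ : α → PMF α) (a : α) : ℕ → PMF α
  | 0 => pure a
  | n + 1 => (iterBind κ a n).bind κ

variable {κ : α → PMF α}

lemma map_iterBind {κ' : β → PMF β} {f : α → β} (hf : ∀ a, (κ a).map f = κ' (f a))
    (a : α) (n : ℕ) : (iterBind κ a n).map f = iterBind κ' (f a) n := by
  induction n with
  | zero => exact pure_map f a
  | succ n ih => simp only [iterBind, map_bind, hf, ← ih, bind_map, Function.comp_def]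

lemma bind_iterBind_of_bind_eq {μ : PMF α} (hμ : μ.bind κ = μ) (n : ℕ) :
    μ.bind (fun a => iterBind κ a n) = μ := by
  induction n with
  | zero => exact bind_pure μ
  | succ n ih => simp only [iterBind, ← bind_bind, ih, hμ]

lemma expect_iterBind_le {V : α → ℝ≥0∞} {ρ : ℝ≥0∞} (hV : ∀ a, (κ a).expect V ≤ ρ * V a)
    (a : α) (n : ℕ) : (iterBind κ a n).expect V ≤ ρ ^ n * V a := by
  induction n with
  | zero => simp [iterBind, expect_pure]
  | succ n ih =>
    calc (iterBind κ a (n + 1)).expect V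
        ≤ (iterBind κ a n).expect fun b => ρ * V b := by
          rw [iterBind, expect_bind]; exact expect_mono _ hV
      _ ≤ ρ ^ (n + 1) * V a := by
          rw [expect_const_mul, pow_succ', mul_assoc]; exact mul_le_mul_right ih ρ

end PMF

section CouplingInequality

variable {α : Type*}

lemma map_fst_sub_map_snd_le (γ : PMF (α × α)) (a : α) :
    γ.map Prod.fst a - γ.map Prod.snd a ≤ ∑' b, {z : α × α | z.1 ≠ z.2}.indicator γ (a, b) := by
  classical
  have hdiag : γ (a, a) ≤ γ.map Prod.snd a := by
    rw [PMF.map_snd_apply]; exact ENNReal.le_tsum a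
  rw [tsub_le_iff_right, PMF.map_fst_apply, ENNReal.tsum_eq_add_tsum_ite a, add_comm]
  refine add_le_add ?_ hdiag
  refine le_of_eq (tsum_congr fun b => ?_)
  by_cases hb : b = a <;> simp [hb, Ne.symm]

lemma map_snd_sub_map_fst_le (γ : PMF (α × α)) (b : α) :
    γ.map Prod.snd b - γ.map Prod.fst b ≤ ∑' a, {z : α × α | z.1 ≠ z.2}.indicator γ (a, b) := by
  classical
  have hdiag : γ (b, b) ≤ γ.map Prod.fst b := by
    rw [PMF.map_fst_apply]; exact ENNReal.le_tsum b
  rw [tsub_le_iff_right, PMF.map_snd_apply, ENNReal.tsum_eq_add_tsum_ite b, add_comm]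
  refine add_le_add ?_ hdiag
  refine le_of_eq (tsum_congr fun a => ?_)
  by_cases ha : a = b <;> simp [ha]

lemma tvDist_map_fst_map_snd_le (γ : PMF (α × α)) :
    tvDist (γ.map Prod.fst) (γ.map Prod.snd) ≤ γ.toOuterMeasure {z | z.1 ≠ z.2} := by
  set μ := γ.map Prod.fst
  set ν := γ.map Prod.snd
  set off := {z : α × α | z.1 ≠ z.2}.indicator γ
  have hsum : ∑' a, max (μ a - ν a) (ν a - μ a) ≤ 2 * ∑' z, off z :=
    calc _ ≤ ∑' a, ((μ a - ν a) + (ν a - μ a)) :=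
          ENNReal.tsum_le_tsum fun a => max_le le_self_add le_add_self
      _ ≤ ∑' a, ∑' b, off (a, b) + ∑' b, ∑' a, off (a, b) := by
          rw [ENNReal.tsum_add]
          exact add_le_add (ENNReal.tsum_le_tsum (map_fst_sub_map_snd_le γ))
            (ENNReal.tsum_le_tsum (map_snd_sub_map_fst_le γ))
      _ = 2 * ∑' z, off z := by
          rw [ENNReal.tsum_comm (f := fun b a => off (a, b)), ← ENNReal.tsum_prod', two_mul]
  rw [tvDist, PMF.toOuterMeasure_apply]
  calc _ ≤ 1 / 2 * (2 * ∑' z, off z) := mul_le_mul_right hsum _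
    _ = ∑' z, off z := by
        rw [← mul_assoc, one_div, ENNReal.inv_mul_cancel two_ne_zero ENNReal.ofNat_ne_top, one_mul]

end CouplingInequality

lemma ENNReal.inv_mul_le_one_sub_inv_mul {n s w : ℝ≥0∞} (hn : n ≠ 0) (hn' : n ≠ ∞) (hw : w ≠ ∞)
    (h : s + w ≤ n * w) : n⁻¹ * s ≤ (1 - n⁻¹) * w := by
  rw [ENNReal.sub_mul fun _ _ => hw, one_mul]
  refine ENNReal.le_sub_of_add_le_right (ENNReal.mul_ne_top (ENNReal.inv_ne_top.mpr hn) hw) ?_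
  calc n⁻¹ * s + n⁻¹ * w = n⁻¹ * (s + w) := (mul_add _ _ _).symm
    _ ≤ n⁻¹ * (n * w) := mul_le_mul_right h _
    _ = w := by rw [← mul_assoc, ENNReal.inv_mul_cancel hn hn', one_mul]

lemma Finset.sum_ite_mem_univ {α M : Type*} [Fintype α] [DecidableEq α] [NonAssocSemiring M]
    (s : Finset α) (a b : M) : ∑ x, (if x ∈ s then a else b) = #s * a + #sᶜ * b := by
  rw [sum_ite, sum_const, sum_const, nsmul_eq_mul, nsmul_eq_mul, filter_mem_eq_inter,
    univ_inter, filter_not, filter_mem_eq_inter, univ_inter, compl_eq_univ_sdiff]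

open Equiv Equiv.Perm

namespace Equiv.Perm

variable {α : Type*} [DecidableEq α] [Fintype α] (σ : Perm α) (p p' : α)

lemma support_swap_mul_mul_swap_subset (hp' : p' ∈ σ.support) :
    (swap p (σ p') * σ * swap p p').support ⊆ σ.support.erase p := by
  intro i hi
  have hip : i ≠ p := by
    rintro rfl; exact mem_support.mp hi (by simp)
  refine mem_erase.mpr ⟨hip, mem_support.mpr fun hfix => mem_support.mp hi ?_⟩
  have hip' : i ≠ p' := by rintro rfl; exact mem_support.mp hp' hfix
  have hiσ : i ≠ σ p' := fun h => hip' (σ.injective (hfix.trans h))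
  simp [swap_apply_of_ne_of_ne hip hip', hfix, swap_apply_of_ne_of_ne hip hiσ]

lemma card_support_swap_mul_mul_swap_le :
    #(swap p (σ p') * σ * swap p p').support ≤ #σ.support := by
  by_cases hp' : p' ∈ σ.support
  · exact (card_le_card (support_swap_mul_mul_swap_subset σ p p' hp')).trans card_erase_le
  · -- `σ` fixes `p'`, so the step conjugates `σ` by `swap p p'`.
    have hconj := card_support_conj (σ := swap p p') (τ := σ)
    rw [swap_inv] at hconj
    rw [notMem_support.mp hp', hconj]

lemma card_support_swap_mul_mul_swap_lt (hp : p ∈ σ.support) (hp' : p' ∈ σ.support) :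
    #(swap p (σ p') * σ * swap p p').support < #σ.support :=
  (card_le_card (support_swap_mul_mul_swap_subset σ p p' hp')).trans_lt (card_erase_lt_of_mem hp)

end Equiv.Perm

noncomputable def mismatchPotential (m : ℕ) : ℝ≥0∞ := ENNReal.ofReal (2 * m / (m + 1))

lemma mismatchPotential_mono : Monotone mismatchPotential := by
  intro m n hmn
  refine ENNReal.ofReal_le_ofReal ?_
  have : (m : ℝ) ≤ n := by exact_mod_cast hmn
  rw [div_le_div_iff₀ (by positivity) (by positivity)]
  nlinarith

lemma mismatchPotential_le_two (m : ℕ) : mismatchPotential m ≤ 2 := by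
  rw [mismatchPotential, ← ENNReal.ofReal_ofNat 2]
  refine ENNReal.ofReal_le_ofReal ((div_le_iff₀ (by positivity)).mpr ?_)
  linarith

lemma one_le_mismatchPotential {m : ℕ} (hm : 1 ≤ m) : 1 ≤ mismatchPotential m := by
  rw [mismatchPotential, ← ENNReal.ofReal_one]
  refine ENNReal.ofReal_le_ofReal ((le_div_iff₀ (by positivity)).mpr ?_)
  have : (1 : ℝ) ≤ m := by exact_mod_cast hm
  linarith

lemma sq_mul_mismatchPotential_pred_add (m : ℕ) :
    (m : ℝ≥0∞) ^ 2 * mismatchPotential (m - 1) + mismatchPotential m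
      = (m : ℝ≥0∞) ^ 2 * mismatchPotential m := by
  rcases m with _ | k
  · simp [mismatchPotential]
  rw [Nat.add_sub_cancel, mismatchPotential, mismatchPotential, ← ENNReal.ofReal_natCast,
    ← ENNReal.ofReal_pow (by positivity), ← ENNReal.ofReal_mul (by positivity),
    ← ENNReal.ofReal_mul (by positivity), ← ENNReal.ofReal_add (by positivity) (by positivity)]
  congr 1
  push_cast
  field_simp
  ring

lemma sum_mismatchPotential_add_le {α : Type*} [Fintype α] [DecidableEq α] (σ : Perm α) :
    ∑ p, ∑ p', mismatchPotential #(swap p (σ p') * σ * swap p p').support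
        + mismatchPotential #σ.support
      ≤ (Fintype.card α : ℝ≥0∞) ^ 2 * mismatchPotential #σ.support := by
  set m := #σ.support
  set S := σ.support ×ˢ σ.support
  have hterm : ∀ p p', mismatchPotential #(swap p (σ p') * σ * swap p p').support
      ≤ if (p, p') ∈ S then mismatchPotential (m - 1) else mismatchPotential m := by
    intro p p'
    split_ifs with hS
    · rw [mem_product] at hS
      exact mismatchPotential_mono
        (Nat.le_sub_one_of_lt (card_support_swap_mul_mul_swap_lt σ p p' hS.1 hS.2))
    · exact mismatchPotential_mono (card_support_swap_mul_mul_swap_le σ p p')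
  have hcard : (#S : ℝ≥0∞) + #Sᶜ = (Fintype.card α : ℝ≥0∞) ^ 2 := by
    rw [← Nat.cast_add, card_add_card_compl, Fintype.card_prod]
    push_cast; ring
  calc _ ≤ ∑ z : α × α, (if z ∈ S then mismatchPotential (m - 1) else mismatchPotential m)
          + mismatchPotential m := by
        rw [← Fintype.sum_prod_type']
        exact add_le_add_left (sum_le_sum fun z _ => hterm z.1 z.2) _
    _ = (m : ℝ≥0∞) ^ 2 * mismatchPotential (m - 1) + mismatchPotential m
          + #Sᶜ * mismatchPotential m := by
        rw [sum_ite_mem_univ, card_product]; push_cast; ring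
    _ = (Fintype.card α : ℝ≥0∞) ^ 2 * mismatchPotential m := by
        rw [sq_mul_mismatchPotential_pred_add, ← hcard, card_product]; push_cast; ring

/-- `(e⁻¹ * d).support` is the set of positions at which the decks `d` and `e` differ. -/
def mismatchCount {α : Type*} [Fintype α] [DecidableEq α] (x : Perm α × Perm α) : ℕ :=
  #(x.2⁻¹ * x.1).support

lemma one_le_mismatchPotential_mismatchCount {α : Type*} [Fintype α] [DecidableEq α]
    {x : Perm α × Perm α} (hx : x.1 ≠ x.2) : 1 ≤ mismatchPotential (mismatchCount x) := by
  refine one_le_mismatchPotential (card_pos.mpr (nonempty_iff_ne_empty.mpr ?_))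
  rw [Ne, support_eq_empty_iff, inv_mul_eq_one]
  exact Ne.symm hx

section Shuffle

variable {N : ℕ} (h : 0 < N)

lemma rtransWalk_eq_iterBind (d : Perm (Fin N)) (n : ℕ) :
    rtransWalk h d n = PMF.iterBind (rtransStep h) d n := by
  induction n with
  | zero => rfl
  | succ n ih => rw [rtransWalk, ih]; rfl

lemma uniformPerm_bind_rtransStep : (uniformPerm N).bind (rtransStep h) = uniformPerm N := by
  have : Nonempty (Fin N) := ⟨⟨0, h⟩⟩
  have : Nonempty (Perm (Fin N)) := ⟨1⟩
  have hright : ∀ g : Perm (Fin N),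
      (PMF.uniformOfFintype (Perm (Fin N))).bind (fun d => PMF.pure (d * g))
        = PMF.uniformOfFintype (Perm (Fin N)) := fun g =>
    PMF.map_uniformOfFintype_equiv (Equiv.mulRight g)
  change (uniformPerm N).bind (fun d => rtransStep h d) = _
  simp only [rtransStep]
  rw [uniformPerm, PMF.bind_comm]
  conv_lhs => enter [2, p]; rw [PMF.bind_comm]
  simp only [hright, PMF.bind_const]

/-- Both decks move the card `x.1 p'` to position `p`, so that afterwards they agree at `p`. -/
noncomputable def coupledStep (x : Perm (Fin N) × Perm (Fin N)) :
    PMF (Perm (Fin N) × Perm (Fin N)) :=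
  have : Nonempty (Fin N) := ⟨⟨0, h⟩⟩
  (PMF.uniformOfFintype (Fin N)).bind fun p =>
    (PMF.uniformOfFintype (Fin N)).bind fun p' =>
      PMF.pure (x.1 * swap p p', x.2 * swap p (x.2⁻¹ (x.1 p')))

lemma map_fst_coupledStep (x : Perm (Fin N) × Perm (Fin N)) :
    (coupledStep h x).map Prod.fst = rtransStep h x.1 := by
  simp only [coupledStep, rtransStep, PMF.map_bind, PMF.pure_map]

lemma map_snd_coupledStep (x : Perm (Fin N) × Perm (Fin N)) :
    (coupledStep h x).map Prod.snd = rtransStep h x.2 := by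
  have : Nonempty (Fin N) := ⟨⟨0, h⟩⟩
  simp only [coupledStep, rtransStep, PMF.map_bind, PMF.pure_map]
  congr 1; funext p
  exact PMF.uniformOfFintype_bind_equiv (x.1.trans x.2⁻¹) fun q => PMF.pure (x.2 * swap p q)

lemma expect_coupledStep_le (x : Perm (Fin N) × Perm (Fin N)) :
    (coupledStep h x).expect (fun y => mismatchPotential (mismatchCount y))
      ≤ (1 - ((N : ℝ≥0∞) ^ 2)⁻¹) * mismatchPotential (mismatchCount x) := by
  obtain ⟨d, e⟩ := x
  have hcount : ∀ p p', mismatchCount (d * swap p p', e * swap p (e⁻¹ (d p')))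
      = #(swap p ((e⁻¹ * d) p') * (e⁻¹ * d) * swap p p').support := by
    intro p p'
    simp [mismatchCount, mul_inv_rev, mul_assoc]
  have hsum := sum_mismatchPotential_add_le (e⁻¹ * d)
  rw [Fintype.card_fin] at hsum
  simp only [coupledStep, PMF.expect_bind, PMF.expect_pure, PMF.expect_uniformOfFintype,
    Fintype.card_fin, hcount, ← mul_sum, ← mul_assoc]
  rw [← ENNReal.mul_inv (by simp) (by simp), ← sq]
  exact ENNReal.inv_mul_le_one_sub_inv_mul (by simp; omega) (by simp) ENNReal.ofReal_ne_top hsum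

lemma tvDist_rtransWalk_uniformPerm_le (d : Perm (Fin N)) (n : ℕ) :
    tvDist (rtransWalk h d n) (uniformPerm N) ≤ (1 - ((N : ℝ≥0∞) ^ 2)⁻¹) ^ n * 2 := by
  set γ := (uniformPerm N).bind fun e => PMF.iterBind (coupledStep h) (d, e) n
  have hfst : γ.map Prod.fst = rtransWalk h d n := by
    simp only [γ, PMF.map_bind, PMF.map_iterBind (map_fst_coupledStep h), PMF.bind_const,
      rtransWalk_eq_iterBind]
  have hsnd : γ.map Prod.snd = uniformPerm N := by
    simp only [γ, PMF.map_bind, PMF.map_iterBind (map_snd_coupledStep h)]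
    exact PMF.bind_iterBind_of_bind_eq (uniformPerm_bind_rtransStep h) n
  rw [← hfst, ← hsnd]
  calc _ ≤ γ.toOuterMeasure {z | z.1 ≠ z.2} := tvDist_map_fst_map_snd_le γ
    _ ≤ γ.expect fun y => mismatchPotential (mismatchCount y) :=
        γ.toOuterMeasure_le_expect fun y hy => one_le_mismatchPotential_mismatchCount hy
    _ ≤ (1 - ((N : ℝ≥0∞) ^ 2)⁻¹) ^ n * 2 := PMF.expect_bind_le _ fun e =>
        (PMF.expect_iterBind_le (expect_coupledStep_le h) _ n).trans
          (mul_le_mul_right (mismatchPotential_le_two _) _)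

end Shuffle

lemma one_sub_inv_sq_pow_le {N : ℕ} (hN : 2 ≤ N) :
    (1 - ((N : ℝ≥0∞) ^ 2)⁻¹) ^ ⌈2 * (N : ℝ) ^ 2 * Real.log N⌉₊ ≤ ENNReal.ofReal (N : ℝ)⁻¹ := by
  set K := ⌈2 * (N : ℝ) ^ 2 * Real.log N⌉₊
  have hN0 : (0 : ℝ) < N := by positivity
  have hN1 : (1 : ℝ) ≤ N := by exact_mod_cast (by omega : 1 ≤ N)
  have hinv : ((N : ℝ) ^ 2)⁻¹ ≤ 1 := inv_le_one_of_one_le₀ (one_le_pow₀ hN1)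
  have hcast : 1 - ((N : ℝ≥0∞) ^ 2)⁻¹ = ENNReal.ofReal (1 - ((N : ℝ) ^ 2)⁻¹) := by
    rw [ENNReal.ofReal_sub _ (by positivity), ENNReal.ofReal_one,
      ENNReal.ofReal_inv_of_pos (by positivity), ENNReal.ofReal_pow hN0.le, ENNReal.ofReal_natCast]
  have hK : 2 * Real.log N ≤ K / (N : ℝ) ^ 2 := by
    rw [le_div_iff₀ (by positivity)]
    linarith [Nat.le_ceil (2 * (N : ℝ) ^ 2 * Real.log N)]
  rw [hcast, ← ENNReal.ofReal_pow (sub_nonneg.mpr hinv)]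
  refine ENNReal.ofReal_le_ofReal ?_
  calc (1 - ((N : ℝ) ^ 2)⁻¹) ^ K ≤ Real.exp (-((N : ℝ) ^ 2)⁻¹) ^ K :=
        pow_le_pow_left₀ (sub_nonneg.mpr hinv)
          (by linarith [Real.add_one_le_exp (-((N : ℝ) ^ 2)⁻¹)]) K
    _ = Real.exp (-(K / (N : ℝ) ^ 2)) := by rw [← Real.exp_nat_mul]; ring_nf
    _ ≤ Real.exp (-Real.log N) := by
        gcongr
        linarith [Real.log_nonneg hN1]
    _ = (N : ℝ)⁻¹ := by rw [Real.exp_neg, Real.exp_log hN0]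

/-- **Convergence of random transpositions to the uniform shuffle.** There is a constant `C > 0`
such that for all `N ≥ 2`, taking `K = ⌈2N²·log N⌉` steps of the random-transpositions shuffle
brings the deck within TV distance `C/N` of the uniform distribution on permutations, from any
starting deck. -/
theorem rtransWalk_mixes_to_uniform :
    ∃ C : ℝ, 0 < C ∧
      ∀ N : ℕ, (hN : 2 ≤ N) → ∀ d : Equiv.Perm (Fin N),
        tvDist (rtransWalk (by omega : 0 < N) d ⌈(2 * (N : ℝ) ^ 2) * Real.log N⌉₊)
            (uniformPerm N)
          ≤ ENNReal.ofReal (C / N) := by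
  refine ⟨2, two_pos, fun N hN d => ?_⟩
  calc _ ≤ (1 - ((N : ℝ≥0∞) ^ 2)⁻¹) ^ ⌈2 * (N : ℝ) ^ 2 * Real.log N⌉₊ * 2 :=
        tvDist_rtransWalk_uniformPerm_le _ d _
    _ ≤ ENNReal.ofReal (N : ℝ)⁻¹ * ENNReal.ofReal 2 := by
        rw [ENNReal.ofReal_ofNat]; exact mul_le_mul_left (one_sub_inv_sq_pow_le hN) 2
    _ = ENNReal.ofReal (2 / N) := by
        rw [← ENNReal.ofReal_mul (by positivity), inv_mul_eq_div]
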